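/- Let n ≥ 1 and q > 1, and let the coefficients a_{ij} be as specified. If (u,v) is an entire weak solution in S of the inequality u_t − Lu − |u|^{q−1}u ≥ v_t − Lv − |v|^{q−1}v with u ≥ v everywhere in S, then the non-negative function w := u − v satisfies, for every nonnegative φ ∈ C_c^∞(S): ∫_S [ w_t φ + Σ_{i,j=1}^n a_{ij}(t,x) (∂φ/∂x_i)(∂w/∂x_j) ] dt dx ≥ 2^{1−q} ∫_S w^q φ dt dx. -/

import Mathlib

open MeasureTheory Real

noncomputable section

/-- Euclidean space ℝⁿ. -/
abbrev Xn (n : ℕ) : Type := EuclideanSpace ℝ (Fin n)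

/-- Points of the half-space `S = (0,∞) × ℝⁿ`. -/
abbrev Pt (n : ℕ) : Type := ℝ × Xn n

/-- The half-space `S = (0,∞) × ℝⁿ`. -/
def halfSpace (n : ℕ) : Set (Pt n) := {p | 0 < p.1}

/-- Partial derivative in the time variable. -/
noncomputable def pdT {n : ℕ} (w : Pt n → ℝ) (p : Pt n) : ℝ :=
  fderiv ℝ w p (1, 0)

/-- Partial derivative in the space variable `x_j`. -/
noncomputable def pdX {n : ℕ} (w : Pt n → ℝ) (j : Fin n) (p : Pt n) : ℝ :=
  fderiv ℝ w p (0, EuclideanSpace.single j 1)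

/-- The odd power function `x ↦ |x|^{q-1} x`. -/
noncomputable def oddPow (q x : ℝ) : ℝ := |x| ^ (q - 1) * x

/-- Condition (8): `𝒜(R) ≤ c R^{2-α}` for all `R > 1`, expressed as an a.e. bound
on the majorant `A` over the region `{(t,x) : t > 0, R/2 < |x| < R}`. -/
def Cond8 {n : ℕ} (A : Pt n → ℝ) (α c : ℝ) : Prop :=
  ∀ R : ℝ, 1 < R →
    ∀ᵐ p ∂(volume.restrict
        {p : Pt n | 0 < p.1 ∧ R / 2 < ‖p.2‖ ∧ ‖p.2‖ < R}),
      A p ≤ c * R ^ (2 - α)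

/-- `u` is an entire weak solution of `u_t ≥ Lu + |u|^{q−1}u` in `S`. -/
def WeakSuperSol {n : ℕ} (a : Fin n → Fin n → Pt n → ℝ) (q : ℝ)
    (u : Pt n → ℝ) : Prop :=
  ∀ φ : Pt n → ℝ, ContDiff ℝ (⊤ : ℕ∞) φ → HasCompactSupport φ →
    tsupport φ ⊆ halfSpace n → (∀ p, 0 ≤ φ p) →
    0 ≤ ∫ p in halfSpace n,
        (pdT u p * φ p + ∑ i, ∑ j, a i j p * pdX φ i p * pdX u j p
          - oddPow q (u p) * φ p)

/-- `v` is an entire weak solution of `v_t ≤ Lv + |v|^{q−1}v` in `S`. -/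
def WeakSubSol {n : ℕ} (a : Fin n → Fin n → Pt n → ℝ) (q : ℝ)
    (v : Pt n → ℝ) : Prop :=
  ∀ φ : Pt n → ℝ, ContDiff ℝ (⊤ : ℕ∞) φ → HasCompactSupport φ →
    tsupport φ ⊆ halfSpace n → (∀ p, 0 ≤ φ p) →
    ∫ p in halfSpace n,
        (pdT v p * φ p + ∑ i, ∑ j, a i j p * pdX φ i p * pdX v j p
          - oddPow q (v p) * φ p) ≤ 0

/-- `(u,v)` is an entire weak solution of
`u_t − Lu − |u|^{q−1}u ≥ v_t − Lv − |v|^{q−1}v` in `S`. -/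
def WeakSolPair {n : ℕ} (a : Fin n → Fin n → Pt n → ℝ) (q : ℝ)
    (u v : Pt n → ℝ) : Prop :=
  ∀ φ : Pt n → ℝ, ContDiff ℝ (⊤ : ℕ∞) φ → HasCompactSupport φ →
    tsupport φ ⊆ halfSpace n → (∀ p, 0 ≤ φ p) →
    ∫ p in halfSpace n,
        (pdT u p * φ p + ∑ i, ∑ j, a i j p * pdX φ i p * pdX u j p
          - oddPow q (u p) * φ p) ≥
    ∫ p in halfSpace n,
        (pdT v p * φ p + ∑ i, ∑ j, a i j p * pdX φ i p * pdX v j p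
          - oddPow q (v p) * φ p)

open scoped NNReal

lemma two_rpow_aux {q : ℝ} (hq : 1 < q) (a b : ℝ) (ha : 0 ≤ a) (hb : 0 ≤ b) :
    (2:ℝ) ^ (1-q) * (a + b) ^ q ≤ a ^ q + b ^ q := by
  have h := NNReal.rpow_add_le_mul_rpow_add_rpow a.toNNReal b.toNNReal hq.le
  have h' : ((a.toNNReal + b.toNNReal : ℝ≥0) : ℝ) ^ q ≤
      (2:ℝ) ^ (q-1) * (a ^ q + b ^ q) := by
    calc ((a.toNNReal + b.toNNReal : ℝ≥0) : ℝ) ^ q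
        = (((a.toNNReal + b.toNNReal) ^ q : ℝ≥0) : ℝ) := by
          rw [NNReal.coe_rpow]
      _ ≤ (((2:ℝ≥0) ^ (q-1) * (a.toNNReal ^ q + b.toNNReal ^ q) : ℝ≥0) : ℝ) := by
          exact_mod_cast h
      _ = (2:ℝ) ^ (q-1) * (a ^ q + b ^ q) := by
          push_cast [NNReal.coe_rpow, Real.coe_toNNReal a ha, Real.coe_toNNReal b hb]
          norm_num
  have hab : ((a.toNNReal + b.toNNReal : ℝ≥0) : ℝ) = a + b := by
    push_cast [Real.coe_toNNReal a ha, Real.coe_toNNReal b hb]; ring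
  rw [hab] at h'
  have h2 : (0:ℝ) < (2:ℝ) ^ (1-q) := Real.rpow_pos_of_pos two_pos _
  have := mul_le_mul_of_nonneg_left h' h2.le
  calc (2:ℝ) ^ (1-q) * (a + b) ^ q ≤ (2:ℝ)^(1-q) * ((2:ℝ) ^ (q-1) * (a ^ q + b ^ q)) := this
    _ = a ^ q + b ^ q := by
        rw [← mul_assoc, ← Real.rpow_add two_pos]
        norm_num

lemma rpow_superadd {q : ℝ} (hq : 1 < q) (a b : ℝ) (ha : 0 ≤ a) (hb : 0 ≤ b) :
    a ^ q + b ^ q ≤ (a + b) ^ q := by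
  have h := NNReal.add_rpow_le_rpow_add a.toNNReal b.toNNReal hq.le
  calc a ^ q + b ^ q = ((a.toNNReal ^ q + b.toNNReal ^ q : ℝ≥0) : ℝ) := by
        push_cast [NNReal.coe_rpow, Real.coe_toNNReal a ha, Real.coe_toNNReal b hb]; ring
    _ ≤ (((a.toNNReal + b.toNNReal) ^ q : ℝ≥0) : ℝ) := by exact_mod_cast h
    _ = (a + b) ^ q := by
        push_cast [NNReal.coe_rpow, Real.coe_toNNReal a ha, Real.coe_toNNReal b hb]; ring

lemma oddPow_of_nonneg {q x : ℝ} (hq : 1 < q) (hx : 0 ≤ x) : oddPow q x = x ^ q := by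
  rcases eq_or_lt_of_le hx with h | h
  · simp [oddPow, ← h, Real.zero_rpow (by linarith : q ≠ 0)]
  · rw [oddPow, abs_of_pos h]
    have h1 : x ^ (q-1) * x ^ (1:ℝ) = x ^ q := by rw [← Real.rpow_add h]; norm_num
    rw [Real.rpow_one] at h1; exact h1

lemma oddPow_of_nonpos {q x : ℝ} (hq : 1 < q) (hx : x ≤ 0) : oddPow q x = -((-x) ^ q) := by
  have h := oddPow_of_nonneg hq (neg_nonneg.2 hx)
  rw [oddPow] at h ⊢
  rw [abs_neg] at h
  nlinarith [h]

lemma key_ineq {q : ℝ} (hq : 1 < q) {uu vv : ℝ} (h : vv ≤ uu) :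
    (2:ℝ) ^ (1-q) * (uu - vv) ^ q ≤ oddPow q uu - oddPow q vv := by
  have hw0 : 0 ≤ uu - vv := sub_nonneg.2 h
  have h2 : (2:ℝ) ^ (1-q) ≤ 1 :=
    Real.rpow_le_one_of_one_le_of_nonpos one_le_two (by linarith)
  have hwq : 0 ≤ (uu - vv) ^ q := Real.rpow_nonneg hw0 q
  rcases le_or_gt 0 vv with hv0 | hv0
  · have hu0 : 0 ≤ uu := le_trans hv0 h
    rw [oddPow_of_nonneg hq hu0, oddPow_of_nonneg hq hv0]
    have hB := rpow_superadd hq vv (uu - vv) hv0 hw0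
    rw [show vv + (uu - vv) = uu by ring] at hB
    have : (2:ℝ) ^ (1-q) * (uu - vv) ^ q ≤ 1 * (uu - vv) ^ q :=
      mul_le_mul_of_nonneg_right h2 hwq
    linarith
  · rcases le_or_gt uu 0 with hu0 | hu0
    · rw [oddPow_of_nonpos hq hu0, oddPow_of_nonpos hq hv0.le]
      have hB := rpow_superadd hq (-uu) (uu - vv) (neg_nonneg.2 hu0) hw0
      rw [show -uu + (uu - vv) = -vv by ring] at hB
      have : (2:ℝ) ^ (1-q) * (uu - vv) ^ q ≤ 1 * (uu - vv) ^ q :=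
        mul_le_mul_of_nonneg_right h2 hwq
      linarith
    · rw [oddPow_of_nonneg hq hu0.le, oddPow_of_nonpos hq hv0.le]
      have hA := two_rpow_aux hq uu (-vv) hu0.le (neg_nonneg.2 hv0.le)
      rw [show uu + -vv = uu - vv by ring] at hA
      linarith

lemma integrableOn_halfSpace_of {n : ℕ} {g : Pt n → ℝ} {K : Set (Pt n)}
    (hsupp : Function.support g ⊆ K)
    (hint : IntegrableOn g K volume) : IntegrableOn g (halfSpace n) volume :=
  ((integrableOn_iff_integrable_of_support_subset hsupp).1 hint).integrableOn

/-- an entire weak solution `(u,v)` of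
`u_t − Lu − |u|^{q−1}u ≥ v_t − Lv − |v|^{q−1}v` with `u ≥ v` yields, for
`w := u − v ≥ 0`, the integral inequality
`∫_S [w_t φ + Σ a_{ij} ∂φ/∂x_i ∂w/∂x_j] ≥ 2^{1−q} ∫_S w^q φ`
for every nonnegative test function `φ`. -/

theorem weak_solution_difference_inequality
    (n : ℕ) (hn : 1 ≤ n) (q : ℝ) (hq : 1 < q)
    (a : Fin n → Fin n → Pt n → ℝ)
    (ha_meas : ∀ i j, Measurable (a i j))
    (ha_locbdd : ∀ i j, ∀ K : Set (Pt n), IsCompact K → K ⊆ halfSpace n →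
      ∃ M, ∀ p ∈ K, |a i j p| ≤ M)
    (ha_symm : ∀ i j, ∀ᵐ p ∂(volume.restrict (halfSpace n)), a i j p = a j i p)
    (hform : ∀ᵐ p ∂(volume.restrict (halfSpace n)), ∀ ξ : Xn n,
      0 ≤ ∑ i, ∑ j, a i j p * ξ i * ξ j)
    (u v : Pt n → ℝ)
    (hu : ContDiffOn ℝ 1 u (halfSpace n)) (hv : ContDiffOn ℝ 1 v (halfSpace n))
    (hu_int : LocallyIntegrableOn (fun p => |u p| ^ q) (halfSpace n) volume)
    (hv_int : LocallyIntegrableOn (fun p => |v p| ^ q) (halfSpace n) volume)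
    (hsol : WeakSolPair a q u v)
    (huv : ∀ p ∈ halfSpace n, v p ≤ u p) :
    ∀ φ : Pt n → ℝ, ContDiff ℝ (⊤ : ℕ∞) φ → HasCompactSupport φ →
      tsupport φ ⊆ halfSpace n → (∀ p, 0 ≤ φ p) →
      ∫ p in halfSpace n,
          (pdT (fun r => u r - v r) p * φ p +
            ∑ i, ∑ j, a i j p * pdX φ i p * pdX (fun r => u r - v r) j p) ≥
      2 ^ (1 - q) * ∫ p in halfSpace n, (u p - v p) ^ q * φ p := by
  intro φ hφ hφc hφs hφ0
  have hq0 : (0:ℝ) < q := lt_trans one_pos hq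
  have hopen : IsOpen (halfSpace n) := isOpen_lt continuous_const continuous_fst
  have hmeas : MeasurableSet (halfSpace n) := hopen.measurableSet
  set K : Set (Pt n) := tsupport φ with hKdef
  have hK : IsCompact K := hφc
  have hKsub : K ⊆ halfSpace n := hφs
  -- continuity facts
  have hφcont : Continuous φ := hφ.continuous
  have hdφ : Continuous (fderiv ℝ φ) := hφ.continuous_fderiv (by simp)
  have hpdXφ : ∀ i, Continuous (pdX φ i) :=
    fun i => hdφ.clm_apply continuous_const
  have hu' : ContinuousOn (fderiv ℝ u) (halfSpace n) :=
    hu.continuousOn_fderiv_of_isOpen hopen le_rfl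
  have hv' : ContinuousOn (fderiv ℝ v) (halfSpace n) :=
    hv.continuousOn_fderiv_of_isOpen hopen le_rfl
  have hpdTu : ContinuousOn (pdT u) (halfSpace n) := hu'.clm_apply continuousOn_const
  have hpdTv : ContinuousOn (pdT v) (halfSpace n) := hv'.clm_apply continuousOn_const
  have hpdXu : ∀ j, ContinuousOn (pdX u j) (halfSpace n) :=
    fun j => hu'.clm_apply continuousOn_const
  have hpdXv : ∀ j, ContinuousOn (pdX v j) (halfSpace n) :=
    fun j => hv'.clm_apply continuousOn_const
  have hud : ∀ p ∈ halfSpace n, DifferentiableAt ℝ u p :=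
    fun p hp => (hu.contDiffAt (hopen.mem_nhds hp)).differentiableAt one_ne_zero
  have hvd : ∀ p ∈ halfSpace n, DifferentiableAt ℝ v p :=
    fun p hp => (hv.contDiffAt (hopen.mem_nhds hp)).differentiableAt one_ne_zero
  -- support facts
  have hsφ : Function.support φ ⊆ K := subset_tsupport φ
  have hsdφ : ∀ i, Function.support (pdX φ i) ⊆ K := by
    intro i p hp
    have hne : fderiv ℝ φ p ≠ 0 := by
      intro h0
      apply hp
      simp [pdX, h0]
    exact support_fderiv_subset ℝ hne
  -- oddPow continuity
  have hoddc : Continuous (fun x : ℝ => oddPow q x) := by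
    have : Continuous (fun x : ℝ => |x| ^ (q-1)) :=
      continuous_abs.rpow_const (fun x => Or.inr (by linarith))
    exact this.mul continuous_id
  -- integrability of all pieces
  have hint1 : ∀ (w : Pt n → ℝ), ContinuousOn (pdT w) (halfSpace n) →
      IntegrableOn (fun p => pdT w p * φ p) (halfSpace n) volume := by
    intro w hw
    apply integrableOn_halfSpace_of (K := K)
    · intro p hp
      apply hsφ
      intro h0
      apply hp
      simp [h0]
    · exact (((hw.mono hKsub).mul (hφcont.continuousOn.mono hKsub))).integrableOn_compact hK
  have hint3 : ∀ (w : Pt n → ℝ), ContinuousOn w (halfSpace n) →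
      IntegrableOn (fun p => oddPow q (w p) * φ p) (halfSpace n) volume := by
    intro w hw
    apply integrableOn_halfSpace_of (K := K)
    · intro p hp
      apply hsφ
      intro h0
      apply hp
      simp [h0]
    · exact ((hoddc.comp_continuousOn (hw.mono hKsub)).mul
        (hφcont.continuousOn.mono hKsub)).integrableOn_compact hK
  have hint2 : ∀ (w : Pt n → ℝ), ContDiffOn ℝ 1 w (halfSpace n) →
      (∀ j, ContinuousOn (pdX w j) (halfSpace n)) → ∀ i j,
      IntegrableOn (fun p => a i j p * pdX φ i p * pdX w j p) (halfSpace n) volume := by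
    intro w hwcd hw i j
    apply integrableOn_halfSpace_of (K := K)
    · intro p hp
      apply hsdφ i
      intro h0
      apply hp
      simp [h0]
    · obtain ⟨M, hM⟩ := ha_locbdd i j K hK hKsub
      obtain ⟨C1, hC1⟩ := hK.exists_bound_of_continuousOn (hpdXφ i).continuousOn
      obtain ⟨C2, hC2⟩ := hK.exists_bound_of_continuousOn ((hw j).mono hKsub)
      apply MeasureTheory.Measure.integrableOn_of_bounded
        (M := |M| * |C1| * |C2|) hK.measure_lt_top.ne
      · have hmw : Measurable (pdX w j) := by
          show Measurable fun p => fderiv ℝ w p (0, EuclideanSpace.single j 1)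
          exact measurable_fderiv_apply_const ℝ w (0, EuclideanSpace.single j 1)
        exact (((ha_meas i j).mul (hpdXφ i).measurable).mul hmw).aestronglyMeasurable
      · apply ae_restrict_of_forall_mem hK.measurableSet
        intro p hp
        have e1 : |a i j p| ≤ |M| := (hM p hp).trans (le_abs_self M)
        have e2 : ‖pdX φ i p‖ ≤ |C1| := (hC1 p hp).trans (le_abs_self C1)
        have e3 : ‖pdX w j p‖ ≤ |C2| := (hC2 p hp).trans (le_abs_self C2)
        calc ‖a i j p * pdX φ i p * pdX w j p‖
            = |a i j p| * ‖pdX φ i p‖ * ‖pdX w j p‖ := by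
              simp [abs_mul, Real.norm_eq_abs]
          _ ≤ |M| * |C1| * |C2| := by
              apply mul_le_mul _ e3 (norm_nonneg _) (by positivity)
              exact mul_le_mul e1 e2 (norm_nonneg _) (abs_nonneg _)
  have hsum : ∀ (w : Pt n → ℝ), ContDiffOn ℝ 1 w (halfSpace n) →
      (∀ j, ContinuousOn (pdX w j) (halfSpace n)) →
      IntegrableOn (fun p => ∑ i, ∑ j, a i j p * pdX φ i p * pdX w j p)
        (halfSpace n) volume := by
    intro w hwcd hw
    apply integrable_finset_sum
    intro i _
    apply integrable_finset_sum
    intro j _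
    exact hint2 w hwcd hw i j
  have hFu : IntegrableOn (fun p => pdT u p * φ p +
      ∑ i, ∑ j, a i j p * pdX φ i p * pdX u j p - oddPow q (u p) * φ p)
      (halfSpace n) volume :=
    ((hint1 u hpdTu).add (hsum u hu hpdXu)).sub (hint3 u hu.continuousOn)
  have hFv : IntegrableOn (fun p => pdT v p * φ p +
      ∑ i, ∑ j, a i j p * pdX φ i p * pdX v j p - oddPow q (v p) * φ p)
      (halfSpace n) volume :=
    ((hint1 v hpdTv).add (hsum v hv hpdXv)).sub (hint3 v hv.continuousOn)
  have hΔ : IntegrableOn (fun p => oddPow q (u p) * φ p - oddPow q (v p) * φ p)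
      (halfSpace n) volume := (hint3 u hu.continuousOn).sub (hint3 v hv.continuousOn)
  have h4 : IntegrableOn (fun p => (u p - v p) ^ q * φ p) (halfSpace n) volume := by
    apply integrableOn_halfSpace_of (K := K)
    · intro p hp
      apply hsφ
      intro h0
      apply hp
      simp [h0]
    · exact ((((hu.continuousOn.sub hv.continuousOn).mono hKsub).rpow_const
        (fun p hp => Or.inr hq0.le)).mul
        (hφcont.continuousOn.mono hKsub)).integrableOn_compact hK
  -- pointwise identity on the half space
  have heq : ∀ p ∈ halfSpace n,
      pdT (fun r => u r - v r) p * φ p +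
        ∑ i, ∑ j, a i j p * pdX φ i p * pdX (fun r => u r - v r) j p =
      ((pdT u p * φ p + ∑ i, ∑ j, a i j p * pdX φ i p * pdX u j p
          - oddPow q (u p) * φ p)
        - (pdT v p * φ p + ∑ i, ∑ j, a i j p * pdX φ i p * pdX v j p
          - oddPow q (v p) * φ p))
        + (oddPow q (u p) * φ p - oddPow q (v p) * φ p) := by
    intro p hp
    have e1 : pdT (fun r => u r - v r) p = pdT u p - pdT v p := by
      simp [pdT, fderiv_fun_sub (hud p hp) (hvd p hp)]
    have e2 : ∀ j, pdX (fun r => u r - v r) j p = pdX u j p - pdX v j p := by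
      intro j
      simp [pdX, fderiv_fun_sub (hud p hp) (hvd p hp)]
    rw [e1]
    simp only [e2, mul_sub, Finset.sum_sub_distrib]
    ring
  have hsol' := hsol φ hφ hφc hφs hφ0
  have hmono : ∫ p in halfSpace n, (2:ℝ) ^ (1-q) * ((u p - v p) ^ q * φ p) ≤
      ∫ p in halfSpace n, (oddPow q (u p) * φ p - oddPow q (v p) * φ p) := by
    apply setIntegral_mono_on (h4.const_mul _) hΔ hmeas
    intro p hp
    have hk := key_ineq hq (huv p hp)
    calc (2:ℝ) ^ (1-q) * ((u p - v p) ^ q * φ p)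
        = ((2:ℝ) ^ (1-q) * (u p - v p) ^ q) * φ p := by ring
      _ ≤ (oddPow q (u p) - oddPow q (v p)) * φ p :=
          mul_le_mul_of_nonneg_right hk (hφ0 p)
      _ = oddPow q (u p) * φ p - oddPow q (v p) * φ p := by ring
  rw [ge_iff_le]
  calc (2:ℝ) ^ (1 - q) * ∫ p in halfSpace n, (u p - v p) ^ q * φ p
      = ∫ p in halfSpace n, (2:ℝ) ^ (1-q) * ((u p - v p) ^ q * φ p) :=
        (MeasureTheory.integral_const_mul _ _).symm
    _ ≤ ∫ p in halfSpace n, (oddPow q (u p) * φ p - oddPow q (v p) * φ p) := hmono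
    _ ≤ ((∫ p in halfSpace n, (pdT u p * φ p +
            ∑ i, ∑ j, a i j p * pdX φ i p * pdX u j p - oddPow q (u p) * φ p))
          - (∫ p in halfSpace n, (pdT v p * φ p +
            ∑ i, ∑ j, a i j p * pdX φ i p * pdX v j p - oddPow q (v p) * φ p)))
        + ∫ p in halfSpace n, (oddPow q (u p) * φ p - oddPow q (v p) * φ p) := by
        have : (0:ℝ) ≤ (∫ p in halfSpace n, (pdT u p * φ p +
            ∑ i, ∑ j, a i j p * pdX φ i p * pdX u j p - oddPow q (u p) * φ p))
          - (∫ p in halfSpace n, (pdT v p * φ p +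
            ∑ i, ∑ j, a i j p * pdX φ i p * pdX v j p - oddPow q (v p) * φ p)) := by
          linarith [hsol']
        linarith
    _ = ∫ p in halfSpace n,
          (((pdT u p * φ p + ∑ i, ∑ j, a i j p * pdX φ i p * pdX u j p
              - oddPow q (u p) * φ p)
            - (pdT v p * φ p + ∑ i, ∑ j, a i j p * pdX φ i p * pdX v j p
              - oddPow q (v p) * φ p))
            + (oddPow q (u p) * φ p - oddPow q (v p) * φ p)) := by
        have hFsub : IntegrableOn (fun p => (pdT u p * φ p +
            ∑ i, ∑ j, a i j p * pdX φ i p * pdX u j p - oddPow q (u p) * φ p)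
          - (pdT v p * φ p + ∑ i, ∑ j, a i j p * pdX φ i p * pdX v j p
            - oddPow q (v p) * φ p)) (halfSpace n) volume := hFu.sub hFv
        rw [integral_add hFsub hΔ, integral_sub hFu hFv]
    _ = ∫ p in halfSpace n,
          (pdT (fun r => u r - v r) p * φ p +
            ∑ i, ∑ j, a i j p * pdX φ i p * pdX (fun r => u r - v r) j p) :=
        (setIntegral_congr_fun hmeas (fun p hp => heq p hp)).symm
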